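/- (Weak dependence of score on mixing proportions.) Fix μ₁ < μ₂ ∈ ℝ, two mixing proportions π, π' ∈ (0,1), and x ∈ ℝ with x ≠ (μ₁+μ₂)/2. Writing p_{σ,π}(x) = π φ_{μ₁,σ}(x) + (1−π) φ_{μ₂,σ}(x), the dependence of the score on the mixing proportion vanishes: s_{p_{σ,π}}(x) − s_{p_{σ,π'}}(x) → 0 as σ → 0⁺. -/

import Mathlib

open MeasureTheory Filter

/-- Gaussian density with mean `μ` and standard deviation `σ`. -/
noncomputable def gaussian (μ σ : ℝ) (x : ℝ) : ℝ :=
  (σ * Real.sqrt (2 * Real.pi))⁻¹ * Real.exp (-(x - μ) ^ 2 / (2 * σ ^ 2))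

/-- The score of a density `ρ`: the derivative of its log. -/
noncomputable def score (ρ : ℝ → ℝ) (x : ℝ) : ℝ :=
  deriv (fun y => Real.log (ρ y)) x

/-- Fisher divergence between densities `q` and `p`. -/
noncomputable def fisherDiv (q p : ℝ → ℝ) : ℝ :=
  ∫ x : ℝ, q x * (score q x - score p x) ^ 2

/-!
The score of `w φ₁ + (1 - w) φ₂` is the posterior average of the component scores
`-(x - μᵢ) / σ²`, so the scores for two proportions `w, w'` differ by
`(μ₁ - μ₂) (w - w') σ⁻² · φ₁ φ₂ / (p_w p_w')`. The last factor is at most a constant times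
`min (φ₁ / φ₂) (φ₂ / φ₁) = exp (-|μ₁ - μ₂| |2x - μ₁ - μ₂| / (2σ²))`, which is exponentially small
in `σ⁻²` off the midpoint and beats the polynomial factor `σ⁻²`.
-/

open Real

lemma gaussian_pos (μ : ℝ) {σ : ℝ} (hσ : 0 < σ) (x : ℝ) : 0 < gaussian μ σ x := by
  unfold gaussian; positivity

lemma hasDerivAt_gaussian (μ σ x : ℝ) :
    HasDerivAt (gaussian μ σ) (gaussian μ σ x * (-(x - μ) / σ ^ 2)) x := by
  have hexponent : HasDerivAt (fun y : ℝ => -(y - μ) ^ 2 / (2 * σ ^ 2))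
      (-(2 * (x - μ)) / (2 * σ ^ 2)) x := by
    simpa using ((((hasDerivAt_id x).sub_const μ).pow 2).neg).div_const (2 * σ ^ 2)
  refine (hexponent.exp.const_mul (σ * sqrt (2 * π))⁻¹).congr_deriv ?_
  unfold gaussian
  rw [← mul_neg, mul_div_mul_left _ _ two_ne_zero]
  ring

lemma gaussian_div_gaussian (μ₁ μ₂ : ℝ) {σ : ℝ} (hσ : σ ≠ 0) (x : ℝ) :
    gaussian μ₁ σ x / gaussian μ₂ σ x
      = exp ((μ₁ - μ₂) * (2 * x - μ₁ - μ₂) / 2 * (σ ^ 2)⁻¹) := by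
  unfold gaussian
  rw [mul_div_mul_left _ _ (by positivity), ← exp_sub]
  congr 1
  field_simp
  ring

lemma convex_combination_pos {g₁ g₂ w : ℝ} (hg₁ : 0 < g₁) (hg₂ : 0 < g₂)
    (hw : w ∈ Set.Icc (0 : ℝ) 1) : 0 < w * g₁ + (1 - w) * g₂ := by
  obtain ⟨hw0, hw1⟩ := hw
  nlinarith [mul_nonneg hw0 hg₁.le, mul_nonneg (sub_nonneg.mpr hw1) hg₂.le]

lemma score_gaussian_mixture (μ₁ μ₂ : ℝ) {σ w : ℝ} (hσ : 0 < σ) (hw : w ∈ Set.Icc (0 : ℝ) 1)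
    (x : ℝ) :
    score (fun y => w * gaussian μ₁ σ y + (1 - w) * gaussian μ₂ σ y) x
      = (w * gaussian μ₁ σ x * (-(x - μ₁) / σ ^ 2)
          + (1 - w) * gaussian μ₂ σ x * (-(x - μ₂) / σ ^ 2))
        / (w * gaussian μ₁ σ x + (1 - w) * gaussian μ₂ σ x) := by
  have hmix := convex_combination_pos (gaussian_pos μ₁ hσ x) (gaussian_pos μ₂ hσ x) hw
  have hderiv := ((hasDerivAt_gaussian μ₁ σ x).const_mul w).fun_add
    ((hasDerivAt_gaussian μ₂ σ x).const_mul (1 - w))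
  rw [score, (hderiv.log hmix.ne').deriv]
  ring

lemma weighted_average_sub_weighted_average {a₁ a₂ g₁ g₂ w w' : ℝ}
    (hP : w * g₁ + (1 - w) * g₂ ≠ 0) (hP' : w' * g₁ + (1 - w') * g₂ ≠ 0) :
    (w * g₁ * a₁ + (1 - w) * g₂ * a₂) / (w * g₁ + (1 - w) * g₂)
      - (w' * g₁ * a₁ + (1 - w') * g₂ * a₂) / (w' * g₁ + (1 - w') * g₂)
    = (a₁ - a₂) * (w - w') * (g₁ * g₂ / ((w * g₁ + (1 - w) * g₂) * (w' * g₁ + (1 - w') * g₂))) := by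
  rw [div_sub_div _ _ hP hP', mul_div_assoc']
  congr 1
  ring

lemma mul_div_mixture_mul_mixture_le {g₁ g₂ w w' : ℝ} (hg₁ : 0 < g₁) (hg₂ : 0 < g₂)
    (hw : w ∈ Set.Ioo (0 : ℝ) 1) (hw' : w' ∈ Set.Ioo (0 : ℝ) 1) :
    g₁ * g₂ / ((w * g₁ + (1 - w) * g₂) * (w' * g₁ + (1 - w') * g₂))
      ≤ min (g₁ / g₂) (g₂ / g₁) / (w * w' * ((1 - w) * (1 - w'))) := by
  obtain ⟨hw0, hw1⟩ := hw
  obtain ⟨hw0', hw1'⟩ := hw'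
  have hv : 0 < 1 - w := sub_pos.mpr hw1
  have hv' : 0 < 1 - w' := sub_pos.mpr hw1'
  have hP := convex_combination_pos hg₁ hg₂ ⟨hw0.le, hw1.le⟩
  have hP' := convex_combination_pos hg₁ hg₂ ⟨hw0'.le, hw1'.le⟩
  rw [← min_div_div_right (by positivity)]
  -- `p_w p_w'` dominates both `w w' g₁²` and `(1 - w) (1 - w') g₂²`.
  refine le_min ?_ ?_ <;> rw [div_div, div_le_div_iff₀ (by positivity) (by positivity)]
  · have hdom : (1 - w) * g₂ * ((1 - w') * g₂)
        ≤ (w * g₁ + (1 - w) * g₂) * (w' * g₁ + (1 - w') * g₂) :=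
      mul_le_mul (le_add_of_nonneg_left (by positivity)) (le_add_of_nonneg_left (by positivity))
        (by positivity) hP.le
    have hww : w * w' ≤ 1 := by nlinarith
    nlinarith [mul_le_mul_of_nonneg_right hww (by positivity : 0 ≤ (1 - w) * (1 - w') * g₂ ^ 2),
      mul_le_mul_of_nonneg_left hdom hg₁.le]
  · have hdom : w * g₁ * (w' * g₁)
        ≤ (w * g₁ + (1 - w) * g₂) * (w' * g₁ + (1 - w') * g₂) :=
      mul_le_mul (le_add_of_nonneg_right (by positivity)) (le_add_of_nonneg_right (by positivity))
        (by positivity) hP.le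
    have hvv : (1 - w) * (1 - w') ≤ 1 := by nlinarith
    nlinarith [mul_le_mul_of_nonneg_right hvv (by positivity : 0 ≤ w * w' * g₁ ^ 2),
      mul_le_mul_of_nonneg_left hdom hg₂.le]

lemma min_exp_exp_neg (v : ℝ) : min (exp v) (exp (-v)) = exp (-|v|) := by
  rw [← exp_monotone.map_min, abs_eq_max_neg, ← min_neg_neg, neg_neg, min_comm]

lemma abs_score_sub_score_le (μ₁ μ₂ : ℝ) {σ w w' : ℝ} (hσ : 0 < σ)
    (hw : w ∈ Set.Ioo (0 : ℝ) 1) (hw' : w' ∈ Set.Ioo (0 : ℝ) 1) (x : ℝ) :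
    |score (fun y => w * gaussian μ₁ σ y + (1 - w) * gaussian μ₂ σ y) x
        - score (fun y => w' * gaussian μ₁ σ y + (1 - w') * gaussian μ₂ σ y) x|
      ≤ |μ₁ - μ₂| * |w - w'| / (w * w' * ((1 - w) * (1 - w')))
        * ((σ ^ 2)⁻¹ * exp (-|(μ₁ - μ₂) * (2 * x - μ₁ - μ₂) / 2| * (σ ^ 2)⁻¹)) := by
  have hmin : min (gaussian μ₁ σ x / gaussian μ₂ σ x) (gaussian μ₂ σ x / gaussian μ₁ σ x)
      = exp (-|(μ₁ - μ₂) * (2 * x - μ₁ - μ₂) / 2| * (σ ^ 2)⁻¹) := by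
    rw [← inv_div (gaussian μ₁ σ x), gaussian_div_gaussian μ₁ μ₂ hσ.ne', ← exp_neg,
      min_exp_exp_neg, abs_mul, abs_of_pos (by positivity : 0 < (σ ^ 2)⁻¹), neg_mul]
  have hscores : -(x - μ₁) / σ ^ 2 - -(x - μ₂) / σ ^ 2 = (μ₁ - μ₂) * (σ ^ 2)⁻¹ := by ring
  have hg₁ := gaussian_pos μ₁ hσ x
  have hg₂ := gaussian_pos μ₂ hσ x
  have hP := convex_combination_pos hg₁ hg₂ (Set.Ioo_subset_Icc_self hw)
  have hP' := convex_combination_pos hg₁ hg₂ (Set.Ioo_subset_Icc_self hw')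
  rw [score_gaussian_mixture μ₁ μ₂ hσ (Set.Ioo_subset_Icc_self hw),
    score_gaussian_mixture μ₁ μ₂ hσ (Set.Ioo_subset_Icc_self hw'),
    weighted_average_sub_weighted_average hP.ne' hP'.ne', hscores]
  set g₁ := gaussian μ₁ σ x
  set g₂ := gaussian μ₂ σ x
  calc _ = |μ₁ - μ₂| * |w - w'| * (σ ^ 2)⁻¹
          * (g₁ * g₂ / ((w * g₁ + (1 - w) * g₂) * (w' * g₁ + (1 - w') * g₂))) := by
        rw [abs_mul, abs_mul, abs_mul, abs_of_pos (by positivity : 0 < (σ ^ 2)⁻¹),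
          abs_of_pos (div_pos (mul_pos hg₁ hg₂) (mul_pos hP hP'))]
        ring
    _ ≤ |μ₁ - μ₂| * |w - w'| * (σ ^ 2)⁻¹
          * (min (g₁ / g₂) (g₂ / g₁) / (w * w' * ((1 - w) * (1 - w')))) := by
        gcongr ?_ * ?_
        exact mul_div_mixture_mul_mixture_le hg₁ hg₂ hw hw'
    _ = _ := by
        rw [hmin]
        ring

lemma tendsto_inv_sq_mul_exp_neg_mul_inv_sq {c : ℝ} (hc : 0 < c) :
    Tendsto (fun σ : ℝ => (σ ^ 2)⁻¹ * exp (-c * (σ ^ 2)⁻¹))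
      (nhdsWithin 0 (Set.Ioi 0)) (nhds 0) := by
  have hinv : Tendsto (fun σ : ℝ => (σ ^ 2)⁻¹) (nhdsWithin 0 (Set.Ioi 0)) atTop := by
    simpa only [Function.comp_def, inv_pow] using
      (tendsto_pow_atTop two_ne_zero).comp (tendsto_inv_nhdsGT_zero (𝕜 := ℝ))
  simpa only [Function.comp_def, rpow_one] using
    (tendsto_rpow_mul_exp_neg_mul_atTop_nhds_zero 1 c hc).comp hinv

/-- weak dependence of the score on mixing proportions, small-variance
limit: away from the midpoint the score difference between two mixtures with
different mixing proportions vanishes as `σ → 0⁺`. -/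
theorem score_weak_dependence_on_proportion_small_variance (μ₁ μ₂ w w' : ℝ)
    (hμ : μ₁ < μ₂) (hw : w ∈ Set.Ioo (0 : ℝ) 1) (hw' : w' ∈ Set.Ioo (0 : ℝ) 1)
    (x : ℝ) (hx : x ≠ (μ₁ + μ₂) / 2) :
    Tendsto
      (fun σ => score (fun y => w * gaussian μ₁ σ y + (1 - w) * gaussian μ₂ σ y) x
        - score (fun y => w' * gaussian μ₁ σ y + (1 - w') * gaussian μ₂ σ y) x)
      (nhdsWithin 0 (Set.Ioi 0)) (nhds 0) := by
  have hrate : 0 < |(μ₁ - μ₂) * (2 * x - μ₁ - μ₂) / 2| := by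
    refine abs_pos.mpr (div_ne_zero (mul_ne_zero (sub_ne_zero.mpr hμ.ne) ?_) two_ne_zero)
    contrapose! hx
    linarith
  have hbound := (tendsto_inv_sq_mul_exp_neg_mul_inv_sq hrate).const_mul
    (|μ₁ - μ₂| * |w - w'| / (w * w' * ((1 - w) * (1 - w'))))
  rw [mul_zero] at hbound
  refine squeeze_zero_norm' ?_ hbound
  filter_upwards [self_mem_nhdsWithin] with σ hσ
  exact abs_score_sub_score_le μ₁ μ₂ hσ hw hw' x
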